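/- Let H be a mesh and τ_1, τ_2 distributed types with H ⊢ τ_1 and H ⊢ τ_2. If globaltype(τ_1) = globaltype(τ_2) and localtype(τ_1) = localtype(τ_2), then there exists a bijection π of the set of index tuples over H such that ⟦τ_2⟧_T = ⟦τ_1⟧_T ∘ π. -/

import Mathlib

/-! ## Meshes, index tuples, distributed dimensions and types -/

structure Mesh where
  axes : Finset String
  size : String → ℕ
  size_pos : ∀ x ∈ axes, 1 ≤ size x

def Mesh.hasAxis (H : Mesh) (x : String) (n : ℕ) : Prop :=
  x ∈ H.axes ∧ H.size x = n

abbrev IndexTuple (H : Mesh) : Type :=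
  {ι : String → ℕ // ∀ x : String, (x ∈ H.axes → ι x < H.size x) ∧ (x ∉ H.axes → ι x = 0)}

structure Dim where
  tile : ℕ
  axes : List String
  global : ℕ
deriving DecidableEq

abbrev DType := List Dim

def Mesh.WFDim (H : Mesh) (d : Dim) : Prop :=
  1 ≤ d.tile ∧ d.axes.Nodup ∧ (∀ x ∈ d.axes, x ∈ H.axes) ∧
    d.tile * (d.axes.map H.size).prod = d.global

def Mesh.WFType (H : Mesh) (τ : DType) : Prop :=
  (∀ d ∈ τ, H.WFDim d) ∧ List.Pairwise (fun d e => ∀ x ∈ d.axes, x ∉ e.axes) τ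

def globaltype (τ : DType) : List ℕ := τ.map Dim.global
def localtype (τ : DType) : List ℕ := τ.map Dim.tile
def localsize (τ : DType) : ℕ := (τ.map Dim.tile).prod

def typeAxes : DType → List String
  | [] => []
  | d :: τ => d.axes ++ typeAxes τ

/-- Base offset map of a distributed dimension, `⟦c{xs}n⟧_D`. -/
def dimOffset (H : Mesh) : ℕ → List String → (String → ℕ) → ℕ
  | _, [], _ => 0
  | c, x :: xs, ι => c * ι x + dimOffset H (c * H.size x) xs ι

abbrev BOM (H : Mesh) : Type := IndexTuple H → List ℕ

/-- Base offset map of a distributed type, `⟦τ⟧_T`. -/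
def typeOffset (H : Mesh) (τ : DType) : BOM H :=
  fun ι => τ.map (fun d => dimOffset H d.tile d.axes ι.val)

/-! ## Collective operations (high-level typing rules) -/

inductive Label where
  | allGather (i : ℕ)
  | dynSlice (i : ℕ) (x : String)
  | allToAll (i j : ℕ)
  | allPermute
deriving DecidableEq

inductive OpKind where
  | gather | slice | toAll | permute
deriving DecidableEq

def Label.kind : Label → OpKind
  | .allGather _ => .gather
  | .dynSlice _ _ => .slice
  | .allToAll _ _ => .toAll
  | .allPermute => .permute

inductive Step (H : Mesh) : Label → DType → DType → Prop where
  | allGather {τ : DType} (i : ℕ) {c : ℕ} {x : String} {xs : List String} {s n : ℕ}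
      (hwf : H.WFType τ) (hx : H.hasAxis x n)
      (hi : τ[i]? = some ⟨c, x :: xs, s⟩) :
      Step H (.allGather i) τ (τ.set i ⟨c * n, xs, s⟩)
  | dynSlice {τ : DType} (i : ℕ) (x : String) {c : ℕ} {xs : List String} {s n : ℕ}
      (hwf : H.WFType τ) (hx : H.hasAxis x n) (hfresh : x ∉ typeAxes τ)
      (hi : τ[i]? = some ⟨c * n, xs, s⟩) :
      Step H (.dynSlice i x) τ (τ.set i ⟨c, x :: xs, s⟩)
  | allToAll {τ : DType} (i j : ℕ) {ci : ℕ} {x : String} {xsi : List String} {si cj : ℕ}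
      {xsj : List String} {sj n : ℕ}
      (hwf : H.WFType τ) (hij : i ≠ j) (hx : H.hasAxis x n)
      (hi : τ[i]? = some ⟨ci, x :: xsi, si⟩)
      (hj : τ[j]? = some ⟨cj, xsj, sj⟩)
      (hdvd : n ∣ cj) :
      Step H (.allToAll i j) τ ((τ.set i ⟨ci * n, xsi, si⟩).set j ⟨cj / n, x :: xsj, sj⟩)
  | allPermute {τ₁ τ₂ : DType}
      (hwf1 : H.WFType τ₁) (hwf2 : H.WFType τ₂)
      (hl : localtype τ₁ = localtype τ₂) (hg : globaltype τ₁ = globaltype τ₂) :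
      Step H .allPermute τ₁ τ₂

/-! ## Sequences of collective operations -/

inductive CSeq (H : Mesh) : DType → DType → Type where
  | nil (τ : DType) : CSeq H τ τ
  | cons {τ₁ τ₂ τ₃ : DType} (p : Label) (h : Step H p τ₁ τ₂) (s : CSeq H τ₂ τ₃) : CSeq H τ₁ τ₃

def CSeq.labels {H : Mesh} : {τ₁ τ₂ : DType} → CSeq H τ₁ τ₂ → List Label
  | _, _, .nil _ => []
  | _, _, .cons p _ s => p :: s.labels

def CSeq.typesList {H : Mesh} : {τ₁ τ₂ : DType} → CSeq H τ₁ τ₂ → List DType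
  | _, _, .nil τ => [τ]
  | τ, _, .cons _ _ s => τ :: s.typesList

/-- The height 𝔥 of a sequence: the maximum `localsize` over all types in it. -/
def CSeq.height {H : Mesh} {τ₁ τ₂ : DType} (s : CSeq H τ₁ τ₂) : ℕ :=
  (s.typesList.map localsize).foldr max 0

/-- Cost of a single step with source `σ₁` and target `σ₂`. -/
def stepCost (p : Label) (σ₁ σ₂ : DType) : ℕ :=
  match p with
  | .allGather _ => localsize σ₂
  | .dynSlice _ _ => 0
  | .allToAll _ _ => localsize σ₁
  | .allPermute => localsize σ₁

def CSeq.cost {H : Mesh} : {τ₁ τ₂ : DType} → CSeq H τ₁ τ₂ → ℕ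
  | _, _, .nil _ => 0
  | _, _, @CSeq.cons _ σ₁ σ₂ _ p _ s => stepCost p σ₁ σ₂ + s.cost

/-- Normal form: labels matched by `dynSlice* {allToAll | allPermute}* allGather*`. -/
def NormalFormK (ks : List OpKind) : Prop :=
  ∃ a b c : List OpKind, ks = a ++ b ++ c ∧
    (∀ k ∈ a, k = OpKind.slice) ∧
    (∀ k ∈ b, k = OpKind.toAll ∨ k = OpKind.permute) ∧
    (∀ k ∈ c, k = OpKind.gather)

/-! ## Weak collectives -/

/-- Equivalence of base offset maps. -/
def bomEquiv (H : Mesh) (β₁ β₂ : BOM H) : Prop :=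
  ∃ π : Equiv.Perm (IndexTuple H), β₂ = β₁ ∘ π

/-- The weak collective relation `⟦τ₁⟧_E ▶^p ⟦τ₂⟧_E`, represented on types. -/
def WeakStep (H : Mesh) (p : Label) (τ₁ τ₂ : DType) : Prop :=
  p ≠ Label.allPermute ∧ H.WFType τ₁ ∧ H.WFType τ₂ ∧
  ∃ σ₁ σ₂ : DType, Step H p σ₁ σ₂ ∧
    bomEquiv H (typeOffset H σ₁) (typeOffset H τ₁) ∧
    bomEquiv H (typeOffset H σ₂) (typeOffset H τ₂)

inductive WkSeq (H : Mesh) : DType → DType → Type where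
  | nil (τ : DType) : WkSeq H τ τ
  | cons {τ₁ τ₂ τ₃ : DType} (p : Label) (h : WeakStep H p τ₁ τ₂) (s : WkSeq H τ₂ τ₃) :
      WkSeq H τ₁ τ₃

def WkSeq.labels {H : Mesh} : {τ₁ τ₂ : DType} → WkSeq H τ₁ τ₂ → List Label
  | _, _, .nil _ => []
  | _, _, .cons p _ s => p :: s.labels

def WkSeq.typesList {H : Mesh} : {τ₁ τ₂ : DType} → WkSeq H τ₁ τ₂ → List DType
  | _, _, .nil τ => [τ]
  | τ, _, .cons _ _ s => τ :: s.typesList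

def WkSeq.height {H : Mesh} {τ₁ τ₂ : DType} (s : WkSeq H τ₁ τ₂) : ℕ :=
  (s.typesList.map localsize).foldr max 0

def WkSeq.cost {H : Mesh} : {τ₁ τ₂ : DType} → WkSeq H τ₁ τ₂ → ℕ
  | _, _, .nil _ => 0
  | _, _, @WkSeq.cons _ σ₁ σ₂ _ p _ s => stepCost p σ₁ σ₂ + s.cost

/-! ## Low-level MPI-style collectives on device assignments -/

abbrev DevMap (H : Mesh) (D : Type) := IndexTuple H ≃ D

structure DevAssign (H : Mesh) (D : Type) where
  dmap : DevMap H D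
  bom : BOM H

inductive LLabel where
  | allGather (x : String)
  | allToAll (x : String) (j : ℕ)
  | dynSlice (i : ℕ) (x : String)
  | allPermute
deriving DecidableEq

def LLabel.kind : LLabel → OpKind
  | .allGather _ => .gather
  | .allToAll _ _ => .toAll
  | .dynSlice _ _ => .slice
  | .allPermute => .permute

inductive LStep (H : Mesh) (D : Type) : LLabel → DevAssign H D → DevAssign H D → Type where
  | gather (τ : DType) (i : ℕ) (c : ℕ) (ys : List String) (x : String) (xs : List String)
      (s n : ℕ) (φ φ' : DevMap H D)
      (hwf : H.WFType τ) (hx : H.hasAxis x n)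
      (hi : τ[i]? = some ⟨c, ys ++ x :: xs, s⟩)
      (hmap : typeOffset H (τ.set i ⟨c, x :: (ys ++ xs), s⟩) ∘ ⇑φ'.symm
            = typeOffset H τ ∘ ⇑φ.symm) :
      LStep H D (.allGather x) ⟨φ, typeOffset H τ⟩
        ⟨φ', typeOffset H (τ.set i ⟨c * n, ys ++ xs, s⟩)⟩
  | toAll (τ : DType) (i j : ℕ) (ci : ℕ) (ys : List String) (x : String) (xs : List String)
      (si cj : ℕ) (xsj : List String) (sj n : ℕ) (φ φ' : DevMap H D)
      (hwf : H.WFType τ) (hij : i ≠ j) (hx : H.hasAxis x n)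
      (hi : τ[i]? = some ⟨ci, ys ++ x :: xs, si⟩)
      (hj : τ[j]? = some ⟨cj, xsj, sj⟩)
      (hdvd : n ∣ cj)
      (hmap : typeOffset H (τ.set i ⟨ci, x :: (ys ++ xs), si⟩) ∘ ⇑φ'.symm
            = typeOffset H τ ∘ ⇑φ.symm) :
      LStep H D (.allToAll x j) ⟨φ, typeOffset H τ⟩
        ⟨φ', typeOffset H ((τ.set i ⟨ci * n, ys ++ xs, si⟩).set j ⟨cj / n, x :: xsj, sj⟩)⟩
  | slice (τ : DType) (i : ℕ) (x : String) (c : ℕ) (xs : List String) (s n : ℕ)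
      (φ : DevMap H D)
      (hwf : H.WFType τ) (hx : H.hasAxis x n) (hfresh : x ∉ typeAxes τ)
      (hi : τ[i]? = some ⟨c * n, xs, s⟩) :
      LStep H D (.dynSlice i x) ⟨φ, typeOffset H τ⟩ ⟨φ, typeOffset H (τ.set i ⟨c, x :: xs, s⟩)⟩
  | permute (τ : DType) (ρ : Equiv.Perm (IndexTuple H)) (β' : BOM H)
      (φ φ' : DevMap H D) (π : Equiv.Perm D)
      (hwf : H.WFType τ)
      (hmap : β' ∘ ⇑φ'.symm = (typeOffset H τ ∘ ⇑ρ) ∘ ⇑φ.symm ∘ ⇑π) :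
      LStep H D .allPermute ⟨φ, typeOffset H τ ∘ ⇑ρ⟩ ⟨φ', β'⟩

def LStep.cost {H : Mesh} {D : Type} :
    {l : LLabel} → {a b : DevAssign H D} → LStep H D l a b → ℕ
  | _, _, _, .gather τ i c ys x xs s n .. => localsize (τ.set i ⟨c * n, ys ++ xs, s⟩)
  | _, _, _, .toAll τ .. => localsize τ
  | _, _, _, .slice .. => 0
  | _, _, _, .permute τ .. => localsize τ

inductive LoSeq (H : Mesh) (D : Type) : DevAssign H D → DevAssign H D → Type where
  | nil (a : DevAssign H D) : LoSeq H D a a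
  | cons {a b c : DevAssign H D} (l : LLabel) (st : LStep H D l a b) (s : LoSeq H D b c) :
      LoSeq H D a c

def LoSeq.labels {H : Mesh} {D : Type} : {a b : DevAssign H D} → LoSeq H D a b → List LLabel
  | _, _, .nil _ => []
  | _, _, .cons l _ s => l :: s.labels

def LoSeq.states {H : Mesh} {D : Type} : {a b : DevAssign H D} → LoSeq H D a b → List (DevAssign H D)
  | _, _, .nil a => [a]
  | a, _, .cons _ _ s => a :: s.states

def LoSeq.cost {H : Mesh} {D : Type} : {a b : DevAssign H D} → LoSeq H D a b → ℕ
  | _, _, .nil _ => 0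
  | _, _, .cons _ st s => st.cost + s.cost

/-!
With `k_x` the size of axis `x`, `⟦c{xs}n⟧_D(ι) = c · N(ι)`, where `N(ι)` is the mixed-radix
number whose digits are the `ι_x` (`x ∈ xs`, least significant first) in radices `k_x`. Hence
`⟦c{xs}n⟧_D` is a bijection from the digits on `xs` onto the multiples of `c` below `n`, and for a
well-formed `τ` the map `⟦τ⟧_T` determines `ι` on the axes of `τ` exactly and ignores the others.
So the image of `⟦τ⟧_T` is `{v | c_i ∣ v_i < s_i}`, and every fibre over it is in bijection with
the assignments of the free axes, whose number `∏_H k · ∏ c_i / ∏ s_i` again depends only on the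
local and global types. The fibres of `⟦τ₁⟧_T` and `⟦τ₂⟧_T` therefore match up one by one.
-/

section

variable {H : Mesh}

lemma dimOffset_mul_left (a c : ℕ) (xs : List String) (ι : String → ℕ) :
    dimOffset H (a * c) xs ι = a * dimOffset H c xs ι := by
  induction xs generalizing c with
  | nil => simp [dimOffset]
  | cons x xs ih => simp only [dimOffset, mul_assoc, ih]; ring

lemma dimOffset_eq_mul_dimOffset_one (c : ℕ) (xs : List String) (ι : String → ℕ) :
    dimOffset H c xs ι = c * dimOffset H 1 xs ι := by
  rw [← dimOffset_mul_left, mul_one]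

lemma dimOffset_one_cons (x : String) (xs : List String) (ι : String → ℕ) :
    dimOffset H 1 (x :: xs) ι = ι x + H.size x * dimOffset H 1 xs ι := by
  rw [dimOffset, one_mul, one_mul, dimOffset_eq_mul_dimOffset_one]

lemma dimOffset_congr (c : ℕ) (xs : List String) {ι ι' : String → ℕ}
    (h : ∀ x ∈ xs, ι x = ι' x) : dimOffset H c xs ι = dimOffset H c xs ι' := by
  induction xs generalizing c with
  | nil => rfl
  | cons x xs ih =>
    rw [dimOffset, dimOffset, h x List.mem_cons_self, ih _ fun y hy => h y (by simp [hy])]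

lemma dimOffset_one_lt {xs : List String} {ι : String → ℕ} (hι : ∀ x ∈ xs, ι x < H.size x) :
    dimOffset H 1 xs ι < (xs.map H.size).prod := by
  induction xs with
  | nil => simp [dimOffset]
  | cons x xs ih =>
    have hx := hι x List.mem_cons_self
    have hxs := ih fun y hy => hι y (by simp [hy])
    rw [dimOffset_one_cons, List.map_cons, List.prod_cons]
    nlinarith

lemma eqOn_of_dimOffset_one_eq {xs : List String} {ι ι' : String → ℕ}
    (hι : ∀ x ∈ xs, ι x < H.size x) (hι' : ∀ x ∈ xs, ι' x < H.size x)
    (h : dimOffset H 1 xs ι = dimOffset H 1 xs ι') : ∀ x ∈ xs, ι x = ι' x := by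
  induction xs with
  | nil => simp
  | cons x xs ih =>
    rw [dimOffset_one_cons, dimOffset_one_cons] at h
    have hx := hι x List.mem_cons_self
    have hx' := hι' x List.mem_cons_self
    have hk : 0 < H.size x := by omega
    have hmod := congrArg (· % H.size x) h
    have hdiv := congrArg (· / H.size x) h
    simp only [Nat.add_mul_mod_self_left, Nat.mod_eq_of_lt hx, Nat.mod_eq_of_lt hx'] at hmod
    simp only [Nat.add_mul_div_left _ _ hk, Nat.div_eq_of_lt hx, Nat.div_eq_of_lt hx',
      zero_add] at hdiv
    rintro y (_ | ⟨_, hy⟩)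
    · exact hmod
    · exact ih (fun z hz => hι z (by simp [hz])) (fun z hz => hι' z (by simp [hz])) hdiv y hy

lemma exists_dimOffset_one_eq {xs : List String} (hxs : xs.Nodup) {m : ℕ}
    (hm : m < (xs.map H.size).prod) :
    ∃ ι : String → ℕ, (∀ x ∈ xs, ι x < H.size x) ∧ dimOffset H 1 xs ι = m := by
  induction xs generalizing m with
  | nil => exact ⟨fun _ => 0, by simp, by simp_all [dimOffset]⟩
  | cons x xs ih =>
    rw [List.map_cons, List.prod_cons] at hm
    have hk : 0 < H.size x := Nat.pos_of_ne_zero (by rintro h; simp [h] at hm)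
    obtain ⟨hx, hxs⟩ := List.nodup_cons.mp hxs
    obtain ⟨ι, hι, hιm⟩ := ih hxs (Nat.div_lt_of_lt_mul hm)
    have hupd : ∀ y ∈ xs, Function.update ι x (m % H.size x) y = ι y :=
      fun y hy => Function.update_of_ne (ne_of_mem_of_not_mem hy hx) _ _
    refine ⟨Function.update ι x (m % H.size x), ?_, ?_⟩
    · rintro y (_ | ⟨_, hy⟩)
      · simpa using Nat.mod_lt m hk
      · rw [hupd y hy]; exact hι y hy
    · rw [dimOffset_one_cons, Function.update_self, dimOffset_congr 1 xs hupd, hιm,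
        Nat.mod_add_div]

lemma mem_typeAxes {x : String} {τ : DType} : x ∈ typeAxes τ ↔ ∃ d ∈ τ, x ∈ d.axes := by
  induction τ with
  | nil => simp [typeAxes]
  | cons d τ ih => simp [typeAxes, ih]

lemma Mesh.WFType.of_cons {d : Dim} {τ : DType} (h : H.WFType (d :: τ)) : H.WFType τ :=
  ⟨fun e he => h.1 e (List.mem_cons_of_mem d he), (List.pairwise_cons.mp h.2).2⟩

lemma Mesh.WFType.not_mem_typeAxes_of_mem_head {d : Dim} {τ : DType} (h : H.WFType (d :: τ))
    {x : String} (hx : x ∈ d.axes) : x ∉ typeAxes τ := by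
  rw [mem_typeAxes]
  rintro ⟨e, he, hxe⟩
  exact (List.pairwise_cons.mp h.2).1 e he x hx hxe

lemma Mesh.WFType.mem_axes_of_mem_typeAxes {τ : DType} (h : H.WFType τ) {x : String}
    (hx : x ∈ typeAxes τ) : x ∈ H.axes := by
  obtain ⟨d, hd, hxd⟩ := mem_typeAxes.mp hx
  exact (h.1 d hd).2.2.1 x hxd

lemma Mesh.WFType.nodup_typeAxes {τ : DType} (h : H.WFType τ) : (typeAxes τ).Nodup := by
  induction τ with
  | nil => simp [typeAxes]
  | cons d τ ih =>
    exact List.nodup_append'.mpr ⟨(h.1 d List.mem_cons_self).2.1, ih h.of_cons,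
      fun _ hx => h.not_mem_typeAxes_of_mem_head hx⟩

lemma Mesh.WFType.prod_size_typeAxes_mul_prod_localtype {τ : DType} (h : H.WFType τ) :
    ((typeAxes τ).map H.size).prod * (localtype τ).prod = (globaltype τ).prod := by
  induction τ with
  | nil => simp [typeAxes, localtype, globaltype]
  | cons d τ ih =>
    have hd := (h.1 d List.mem_cons_self).2.2.2
    simp only [localtype, globaltype] at ih ⊢
    simp only [typeAxes, List.map_cons, List.map_append, List.prod_cons, List.prod_append,
      ← ih h.of_cons, ← hd]
    ring

def rawOffset (H : Mesh) (τ : DType) (ι : String → ℕ) : List ℕ :=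
  τ.map fun d => dimOffset H d.tile d.axes ι

lemma rawOffset_congr (τ : DType) {ι ι' : String → ℕ} (h : ∀ x ∈ typeAxes τ, ι x = ι' x) :
    rawOffset H τ ι = rawOffset H τ ι' :=
  List.map_congr_left fun d hd =>
    dimOffset_congr _ _ fun x hx => h x (mem_typeAxes.mpr ⟨d, hd, hx⟩)

/-- The image of `typeOffset H τ` when `H.WFType τ`. -/
def IsValidOffset (τ : DType) (v : List ℕ) : Prop :=
  List.Forall₂ (fun d w => d.tile ∣ w ∧ w < d.global) τ v

lemma isValidOffset_iff (τ : DType) (v : List ℕ) :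
    IsValidOffset τ v ↔
      List.Forall₂ (fun p w => p.1 ∣ w ∧ w < p.2) ((localtype τ).zip (globaltype τ)) v := by
  rw [localtype, globaltype, List.zip_map', List.forall₂_map_left_iff, IsValidOffset]

lemma isValidOffset_rawOffset {τ : DType} (h : H.WFType τ) {ι : String → ℕ}
    (hι : ∀ x ∈ typeAxes τ, ι x < H.size x) : IsValidOffset τ (rawOffset H τ ι) := by
  induction τ with
  | nil => exact List.Forall₂.nil
  | cons d τ ih =>
    obtain ⟨-, -, -, hglobal⟩ := h.1 d List.mem_cons_self
    refine .cons ⟨?_, ?_⟩ (ih h.of_cons fun x hx => hι x (List.mem_append_right _ hx))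
    · dsimp only; rw [dimOffset_eq_mul_dimOffset_one]; exact dvd_mul_right _ _
    · dsimp only; rw [dimOffset_eq_mul_dimOffset_one, ← hglobal]
      exact Nat.mul_lt_mul_of_pos_left
        (dimOffset_one_lt fun x hx => hι x (List.mem_append_left _ hx))
        (h.1 d List.mem_cons_self).1

lemma Mesh.WFType.eqOn_of_rawOffset_eq {τ : DType} (h : H.WFType τ) {ι ι' : String → ℕ}
    (hι : ∀ x ∈ typeAxes τ, ι x < H.size x) (hι' : ∀ x ∈ typeAxes τ, ι' x < H.size x)
    (heq : rawOffset H τ ι = rawOffset H τ ι') : ∀ x ∈ typeAxes τ, ι x = ι' x := by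
  induction τ with
  | nil => simp [typeAxes]
  | cons d τ ih =>
    simp only [rawOffset, List.map_cons, List.cons.injEq,
      dimOffset_eq_mul_dimOffset_one d.tile] at heq
    have htile := (h.1 d List.mem_cons_self).1
    intro x hx
    rcases List.mem_append.mp hx with hx | hx
    · exact eqOn_of_dimOffset_one_eq (fun y hy => hι y (List.mem_append_left _ hy))
        (fun y hy => hι' y (List.mem_append_left _ hy))
        (Nat.eq_of_mul_eq_mul_left htile heq.1) x hx
    · exact ih h.of_cons (fun y hy => hι y (List.mem_append_right _ hy))
        (fun y hy => hι' y (List.mem_append_right _ hy)) heq.2 x hx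

lemma Mesh.WFType.exists_rawOffset_eq {τ : DType} (h : H.WFType τ) {v : List ℕ}
    (hv : IsValidOffset τ v) :
    ∃ ι : String → ℕ, (∀ x ∈ typeAxes τ, ι x < H.size x) ∧ rawOffset H τ ι = v := by
  classical
  induction hv with
  | nil => exact ⟨fun _ => 0, by simp [typeAxes], rfl⟩
  | @cons d w τ v hw _ ih =>
    obtain ⟨htile, hnodup, -, hglobal⟩ := h.1 d List.mem_cons_self
    obtain ⟨⟨m, rfl⟩, hlt⟩ := hw
    rw [← hglobal] at hlt
    obtain ⟨ιd, hιd, hιdm⟩ := exists_dimOffset_one_eq hnodup (Nat.lt_of_mul_lt_mul_left hlt)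
    obtain ⟨ι, hι, hιv⟩ := ih h.of_cons
    have hhead : ∀ x ∈ d.axes, (fun y => if y ∈ d.axes then ιd y else ι y) x = ιd x :=
      fun x hx => if_pos hx
    have htail : ∀ x ∈ typeAxes τ, (fun y => if y ∈ d.axes then ιd y else ι y) x = ι x :=
      fun x hx => if_neg fun hx' => h.not_mem_typeAxes_of_mem_head hx' hx
    refine ⟨fun y => if y ∈ d.axes then ιd y else ι y, fun x hx => ?_, ?_⟩
    · rcases List.mem_append.mp hx with hx | hx
      · rw [hhead x hx]; exact hιd x hx
      · rw [htail x hx]; exact hι x hx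
    · change dimOffset H d.tile d.axes _ :: rawOffset H τ _ = _
      rw [dimOffset_congr _ _ hhead, rawOffset_congr τ htail, hιv,
        dimOffset_eq_mul_dimOffset_one, hιdm]

lemma Mesh.WFType.globaltype_prod_pos {τ : DType} (h : H.WFType τ) : 0 < (globaltype τ).prod := by
  refine List.prod_pos fun s hs => ?_
  obtain ⟨d, hd, rfl⟩ := List.mem_map.mp hs
  obtain ⟨htile, -, haxes, hglobal⟩ := h.1 d hd
  rw [← hglobal]
  refine Nat.mul_pos htile (List.prod_pos fun k hk => ?_)
  obtain ⟨x, hx, rfl⟩ := List.mem_map.mp hk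
  exact H.size_pos x (haxes x hx)

lemma Mesh.WFType.prod_size_sdiff_typeAxes_mul {τ : DType} (h : H.WFType τ) :
    (∏ x ∈ H.axes \ (typeAxes τ).toFinset, H.size x) * (globaltype τ).prod
      = (∏ x ∈ H.axes, H.size x) * (localtype τ).prod := by
  have hsub : (typeAxes τ).toFinset ⊆ H.axes := fun x hx =>
    h.mem_axes_of_mem_typeAxes (List.mem_toFinset.mp hx)
  rw [← h.prod_size_typeAxes_mul_prod_localtype, ← mul_assoc,
    ← List.prod_toFinset _ h.nodup_typeAxes, Finset.prod_sdiff hsub]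

lemma Mesh.WFType.prod_size_sdiff_typeAxes_eq {τ₁ τ₂ : DType} (h₁ : H.WFType τ₁) (h₂ : H.WFType τ₂)
    (hg : globaltype τ₁ = globaltype τ₂) (hl : localtype τ₁ = localtype τ₂) :
    ∏ x ∈ H.axes \ (typeAxes τ₁).toFinset, H.size x
      = ∏ x ∈ H.axes \ (typeAxes τ₂).toFinset, H.size x := by
  refine Nat.eq_of_mul_eq_mul_right h₂.globaltype_prod_pos ?_
  rw [h₂.prod_size_sdiff_typeAxes_mul, ← hg, h₁.prod_size_sdiff_typeAxes_mul, hl]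

abbrev FreeCoords (H : Mesh) (τ : DType) : Type :=
  (x : ↥(H.axes \ (typeAxes τ).toFinset)) → Fin (H.size x)

lemma card_freeCoords (τ : DType) :
    Fintype.card (FreeCoords H τ) = ∏ x ∈ H.axes \ (typeAxes τ).toFinset, H.size x := by
  simp only [Fintype.card_pi, Fintype.card_fin, Finset.prod_coe_sort]

lemma isValidOffset_typeOffset {τ : DType} (h : H.WFType τ) (ι : IndexTuple H) :
    IsValidOffset τ (typeOffset H τ ι) :=
  isValidOffset_rawOffset h fun x hx => (ι.2 x).1 (h.mem_axes_of_mem_typeAxes hx)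

lemma Mesh.WFType.isEmpty_fiber {τ : DType} (h : H.WFType τ) {v : List ℕ}
    (hv : ¬IsValidOffset τ v) : IsEmpty {ι : IndexTuple H // typeOffset H τ ι = v} :=
  ⟨fun ι => hv (ι.2 ▸ isValidOffset_typeOffset h ι.1)⟩

def restrictFree (τ : DType) (ι : IndexTuple H) : FreeCoords H τ :=
  fun x => ⟨ι.1 x, (ι.2 x).1 (Finset.mem_sdiff.mp x.2).1⟩

lemma Mesh.WFType.injective_restrictFree_fiber {τ : DType} (h : H.WFType τ) (v : List ℕ) :
    Function.Injective fun ι : {ι : IndexTuple H // typeOffset H τ ι = v} =>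
      restrictFree τ ι.1 := by
  rintro ⟨ι, hι⟩ ⟨ι', hι'⟩ heq
  have hbound : ∀ κ : IndexTuple H, ∀ x ∈ typeAxes τ, κ.1 x < H.size x :=
    fun κ x hx => (κ.2 x).1 (h.mem_axes_of_mem_typeAxes hx)
  have hτ := h.eqOn_of_rawOffset_eq (hbound ι) (hbound ι') (hι.trans hι'.symm)
  refine Subtype.ext (Subtype.ext (funext fun y => ?_))
  by_cases hy : y ∈ typeAxes τ
  · exact hτ y hy
  by_cases hyH : y ∈ H.axes
  · exact congrArg Fin.val (congrFun heq ⟨y, Finset.mem_sdiff.mpr ⟨hyH, by simpa using hy⟩⟩)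
  · rw [(ι.2 y).2 hyH, (ι'.2 y).2 hyH]

lemma Mesh.WFType.surjective_restrictFree_fiber {τ : DType} (h : H.WFType τ) {v : List ℕ}
    (hv : IsValidOffset τ v) :
    Function.Surjective fun ι : {ι : IndexTuple H // typeOffset H τ ι = v} =>
      restrictFree τ ι.1 := by
  classical
  obtain ⟨κ, hκ, hκv⟩ := h.exists_rawOffset_eq hv
  intro r
  let r' : String → ℕ := fun y =>
    if hy : y ∈ H.axes \ (typeAxes τ).toFinset then r ⟨y, hy⟩ else 0
  let ι : String → ℕ := fun y => if y ∈ typeAxes τ then κ y else r' y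
  have hfree : ∀ y ∉ typeAxes τ, ι y = r' y := fun y hy => if_neg hy
  have hιbound : ∀ y, (y ∈ H.axes → ι y < H.size y) ∧ (y ∉ H.axes → ι y = 0) := by
    intro y
    by_cases hy : y ∈ typeAxes τ
    · exact ⟨fun _ => by simpa [ι, hy] using hκ y hy,
        fun hyH => absurd (h.mem_axes_of_mem_typeAxes hy) hyH⟩
    · have hmem : y ∈ H.axes \ (typeAxes τ).toFinset ↔ y ∈ H.axes := by simp [hy]
      rw [hfree y hy]
      exact ⟨fun hyH => by simp only [r', dif_pos (hmem.mpr hyH)]; exact (r ⟨y, hmem.mpr hyH⟩).2,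
        fun hyH => dif_neg (hmem.not.mpr hyH)⟩
  refine ⟨⟨⟨ι, hιbound⟩, ?_⟩, funext fun x => Fin.ext ?_⟩
  · change rawOffset H τ ι = v
    rw [rawOffset_congr τ fun y hy => if_pos hy, hκv]
  · have hx : x.1 ∉ typeAxes τ := by simpa using (Finset.mem_sdiff.mp x.2).2
    simp only [restrictFree, hfree x hx, r', dif_pos x.2]

noncomputable def Mesh.WFType.fiberEquivFreeCoords {τ : DType} (h : H.WFType τ) {v : List ℕ}
    (hv : IsValidOffset τ v) : {ι : IndexTuple H // typeOffset H τ ι = v} ≃ FreeCoords H τ :=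
  Equiv.ofBijective _ ⟨h.injective_restrictFree_fiber v, h.surjective_restrictFree_fiber hv⟩

end

/-- Lemma 5.1: equal global and local types imply the base offset maps are related
by a permutation of the index tuples. -/
theorem stmt7 (H : Mesh) (τ₁ τ₂ : DType) (h1 : H.WFType τ₁) (h2 : H.WFType τ₂)
    (hg : globaltype τ₁ = globaltype τ₂) (hl : localtype τ₁ = localtype τ₂) :
    ∃ π : Equiv.Perm (IndexTuple H), typeOffset H τ₂ = typeOffset H τ₁ ∘ π := by
  have hvalid (v : List ℕ) : IsValidOffset τ₂ v ↔ IsValidOffset τ₁ v := by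
    rw [isValidOffset_iff, isValidOffset_iff, hl, hg]
  have hfree : FreeCoords H τ₂ ≃ FreeCoords H τ₁ := Fintype.equivOfCardEq <| by
    rw [card_freeCoords, card_freeCoords, h1.prod_size_sdiff_typeAxes_eq h2 hg hl]
  have hfiber (v : List ℕ) :
      {ι // typeOffset H τ₂ ι = v} ≃ {ι // typeOffset H τ₁ ι = v} := by
    by_cases hv : IsValidOffset τ₂ v
    · exact (h2.fiberEquivFreeCoords hv).trans
        (hfree.trans (h1.fiberEquivFreeCoords ((hvalid v).mp hv)).symm)
    · have := h2.isEmpty_fiber hv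
      have := h1.isEmpty_fiber ((hvalid v).not.mp hv)
      exact Equiv.equivOfIsEmpty _ _
  exact ⟨Equiv.ofFiberEquiv hfiber, funext fun ι => (Equiv.ofFiberEquiv_map hfiber ι).symm⟩
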